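/- arXiv:1902.02542 — 2 statements merged into one kernel-verified Lean document; each statement's English description precedes it below -/
import Mathlib

section
/- Let 𝒥 : ℝ^n → ℝ be differentiable with L-Lipschitz continuous gradient. Let G ∈ ℝ^n satisfy ⟨∇𝒥(U) - G, G⟩ ≥ -ε_p η ‖G‖² for some ε_p ≥ 0 and step size η > 0. If η ≤ 2/(2ε_p + L), then 𝒥(U - ηG) ≤ 𝒥(U) + (ε_p η² + (η²L - 2η)/2)‖G‖², and in particular 𝒥(U - ηG) ≤ 𝒥(U). -/
/-!
By the descent lemma for an `L`-smooth function, `J (U - η G) ≤ J U - η ⟪∇J U, G⟫ + L η² ‖G‖² / 2`,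
and the inexactness condition bounds `-⟪∇J U, G⟫` by `(εp η - 1) ‖G‖²`. The resulting coefficient
`η (η (2 εp + L) - 2) / 2` of `‖G‖²` is nonpositive when `η ≤ 2 / (2 εp + L)`.
-/

open scoped RealInnerProductSpace

section

variable {E : Type*} [NormedAddCommGroup E] [InnerProductSpace ℝ E] [CompleteSpace E]
  {J : E → ℝ} {L : ℝ}

theorem hasDerivAt_apply_add_smul (hdiff : Differentiable ℝ J) (x v : E) (t : ℝ) :
    HasDerivAt (fun s : ℝ => J (x + s • v)) ⟪gradient J (x + t • v), v⟫ t := by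
  have hline : HasDerivAt (fun s : ℝ => x + s • v) v t := by
    simpa using ((hasDerivAt_id t).smul_const v).const_add x
  have h := (hdiff (x + t • v)).hasGradientAt.hasFDerivAt.comp_hasDerivAt t hline
  rwa [InnerProductSpace.toDual_apply_apply] at h

theorem apply_add_le_of_lipschitz_gradient (hdiff : Differentiable ℝ J)
    (hLip : ∀ x y, ‖gradient J x - gradient J y‖ ≤ L * ‖x - y‖) (x v : E) :
    J (x + v) ≤ J x + ⟪gradient J x, v⟫ + L / 2 * ‖v‖ ^ 2 := by
  set g := gradient J x
  -- `φ` is antitone on `[0, ∞)`: its derivative is `⟪∇J(x + t v) - ∇J x, v⟫ - L t ‖v‖² ≤ 0`.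
  let φ : ℝ → ℝ := fun t => J (x + t • v) - t * ⟪g, v⟫ - L / 2 * t ^ 2 * ‖v‖ ^ 2
  have hφ : ∀ t, HasDerivAt φ (⟪gradient J (x + t • v) - g, v⟫ - L * t * ‖v‖ ^ 2) t := by
    intro t
    have h := ((hasDerivAt_apply_add_smul hdiff x v t).sub
      ((hasDerivAt_id t).mul_const ⟪g, v⟫)).sub
      (((hasDerivAt_pow 2 t).const_mul (L / 2)).mul_const (‖v‖ ^ 2))
    refine h.congr_deriv ?_
    rw [inner_sub_left]
    norm_num only
    ring
  have hφ'_nonpos : ∀ t ∈ interior (Set.Ici (0 : ℝ)),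
      ⟪gradient J (x + t • v) - g, v⟫ - L * t * ‖v‖ ^ 2 ≤ 0 := by
    intro t ht
    rw [interior_Ici] at ht
    have hinner : ⟪gradient J (x + t • v) - g, v⟫ ≤ L * t * ‖v‖ ^ 2 :=
      calc ⟪gradient J (x + t • v) - g, v⟫
          ≤ ‖gradient J (x + t • v) - g‖ * ‖v‖ := real_inner_le_norm _ _
        _ ≤ L * ‖x + t • v - x‖ * ‖v‖ := by gcongr; exact hLip _ _
        _ = L * t * ‖v‖ ^ 2 := by
          rw [add_sub_cancel_left, norm_smul, Real.norm_of_nonneg (le_of_lt ht)]; ring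
    linarith
  have hanti : AntitoneOn φ (Set.Ici 0) :=
    antitoneOn_of_hasDerivWithinAt_nonpos (convex_Ici 0)
      (fun t _ => (hφ t).continuousAt.continuousWithinAt)
      (fun t _ => (hφ t).hasDerivWithinAt) hφ'_nonpos
  have h10 : φ 1 ≤ φ 0 := hanti (Set.mem_Ici.2 le_rfl) (Set.mem_Ici.2 zero_le_one) zero_le_one
  simp only [φ, one_smul, zero_smul, add_zero] at h10
  linarith

theorem apply_sub_smul_le_of_inner_gradient_sub_ge (hdiff : Differentiable ℝ J)
    (hLip : ∀ x y, ‖gradient J x - gradient J y‖ ≤ L * ‖x - y‖) {εp η : ℝ} {x G : E}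
    (hG : ⟪gradient J x - G, G⟫ ≥ -εp * η * ‖G‖ ^ 2) (hη : 0 ≤ η) :
    J (x - η • G) ≤ J x + (εp * η ^ 2 + (η ^ 2 * L - 2 * η) / 2) * ‖G‖ ^ 2 := by
  have hdescent := apply_add_le_of_lipschitz_gradient hdiff hLip x (-(η • G))
  have hnorm : ‖-(η • G)‖ ^ 2 = η ^ 2 * ‖G‖ ^ 2 := by
    rw [norm_neg, norm_smul, Real.norm_eq_abs, mul_pow, sq_abs]
  have hinner : ⟪gradient J x, -(η • G)⟫ = -η * (⟪gradient J x - G, G⟫ + ‖G‖ ^ 2) := by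
    rw [inner_neg_right, real_inner_smul_right, inner_sub_left, real_inner_self_eq_norm_sq]
    ring
  rw [← sub_eq_add_neg, hnorm, hinner] at hdescent
  nlinarith

end

theorem coeff_nonpos_of_le_two_div {L εp η : ℝ} (hη : 0 < η) (hηL : η ≤ 2 / (2 * εp + L)) :
    εp * η ^ 2 + (η ^ 2 * L - 2 * η) / 2 ≤ 0 := by
  -- `2 / 0 = 0` in Lean, so the case `2 εp + L = 0` is excluded by `0 < η` as well.
  have hpos : 0 < 2 * εp + L := by
    by_contra! h
    linarith [div_nonpos_of_nonneg_of_nonpos zero_le_two h]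
  have : η * (2 * εp + L) ≤ 2 := (le_div_iff₀ hpos).1 hηL
  nlinarith

theorem stmt_3_general (n : ℕ) (J : EuclideanSpace ℝ (Fin n) → ℝ) (L εp η : ℝ)
    (U G : EuclideanSpace ℝ (Fin n))
    (hdiff : Differentiable ℝ J)
    (hLip : ∀ x y, ‖gradient J x - gradient J y‖ ≤ L * ‖x - y‖)
    (hG : ⟪gradient J U - G, G⟫ ≥ -εp * η * ‖G‖ ^ 2)
    (hη : 0 < η) (hηL : η ≤ 2 / (2 * εp + L)) :
    J (U - η • G) ≤ J U + (εp * η ^ 2 + (η ^ 2 * L - 2 * η) / 2) * ‖G‖ ^ 2 ∧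
      J (U - η • G) ≤ J U := by
  have hstep := apply_sub_smul_le_of_inner_gradient_sub_ge hdiff hLip hG hη.le
  refine ⟨hstep, hstep.trans ?_⟩
  have := mul_nonpos_of_nonpos_of_nonneg (coeff_nonpos_of_le_two_div hη hηL) (sq_nonneg ‖G‖)
  linarith

/-- Core descent inequality (behind Theorem 1): inexact-gradient descent with an
inexactness condition `⟨∇𝒥(U) - G, G⟩ ≥ -ε_p η ‖G‖²` decreases the objective when
`η ≤ 2/(2ε_p + L)`. -/
theorem stmt_3 (n : ℕ) (J : EuclideanSpace ℝ (Fin n) → ℝ) (L εp η : ℝ)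
    (U G : EuclideanSpace ℝ (Fin n))
    (hdiff : Differentiable ℝ J)
    (hLip : ∀ x y, ‖gradient J x - gradient J y‖ ≤ L * ‖x - y‖)
    (hG : ⟪gradient J U - G, G⟫ ≥ -εp * η * ‖G‖ ^ 2)
    (hL : 0 ≤ L) (hεp : 0 ≤ εp) (hη : 0 < η) (hηL : η ≤ 2 / (2 * εp + L)) :
    J (U - η • G) ≤ J U + (εp * η ^ 2 + (η ^ 2 * L - 2 * η) / 2) * ‖G‖ ^ 2 ∧
      J (U - η • G) ≤ J U :=
  stmt_3_general n J L εp η U G hdiff hLip hG hη hηL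
end

section
/- Let ξ be a random variable and G(U,ξ) = -⟨F(U,ξ), P̂(ξ)⟩ + R(U) an inexact stochastic gradient, where the exact stochastic gradient g(U,ξ) = -⟨F(U,ξ), P(ξ)⟩ + R(U) satisfies ⟨∇𝒥(U), 𝔼[g(U,ξ)]⟩ ≥ μ‖∇𝒥(U)‖², and suppose ‖P(ξ) - P̂(ξ)‖ ≤ ε_p pointwise ‖·‖-relative error so that |⟨F(U,ξ), P(ξ)-P̂(ξ)⟩| ≤ ε_p ‖F(U,ξ)‖‖P̂(ξ)‖, and 𝔼[‖F(U,ξ)‖‖P̂(ξ)‖] ≤ M₁‖∇𝒥(U)‖. Then ⟨∇𝒥(U), 𝔼[G(U,ξ)]⟩ ≥ (μ - ε_p M₁)‖∇𝒥(U)‖². -/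
open MeasureTheory
open scoped RealInnerProductSpace

/-! The two expectations differ by `𝔼[F*(P - P̂)]`, whose norm is at most `ε_p M₁ ‖∇𝒥(U)‖`;
by Cauchy–Schwarz this costs at most `ε_p M₁ ‖∇𝒥(U)‖²` of the alignment of `𝔼 g`. -/

theorem norm_integral_sub_integral_le {Ω E : Type*} [MeasurableSpace Ω] {μ : Measure Ω}
    [NormedAddCommGroup E] [NormedSpace ℝ E] {f g : Ω → E} {b : Ω → ℝ}
    (hf : Integrable f μ) (hg : Integrable g μ) (hb : Integrable b μ)
    (hfg : ∀ ω, ‖f ω - g ω‖ ≤ b ω) :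
    ‖∫ ω, f ω ∂μ - ∫ ω, g ω ∂μ‖ ≤ ∫ ω, b ω ∂μ := by
  rw [← integral_sub hf hg]
  exact norm_integral_le_of_norm_le hb (.of_forall hfg)

theorem real_inner_lower_bound_of_norm_sub_le {E : Type*} [NormedAddCommGroup E]
    [InnerProductSpace ℝ E] {a x y : E} {μ δ : ℝ}
    (hx : μ * ‖a‖ ^ 2 ≤ ⟪a, x⟫) (hxy : ‖y - x‖ ≤ δ * ‖a‖) :
    (μ - δ) * ‖a‖ ^ 2 ≤ ⟪a, y⟫ := by
  have hdev : -(‖a‖ * (δ * ‖a‖)) ≤ ⟪a, y - x⟫ := neg_le_of_abs_le <|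
    (abs_real_inner_le_norm a (y - x)).trans (mul_le_mul_of_nonneg_left hxy (norm_nonneg a))
  calc (μ - δ) * ‖a‖ ^ 2 = μ * ‖a‖ ^ 2 + -(‖a‖ * (δ * ‖a‖)) := by ring
    _ ≤ ⟪a, x⟫ + ⟪a, y - x⟫ := add_le_add hx hdev
    _ = ⟪a, y⟫ := by rw [← inner_add_right, add_sub_cancel]

theorem stmt_5_general (n d : ℕ) (Ω : Type*) [MeasurableSpace Ω]
    (μm : Measure Ω)
    (μ εp M₁ : ℝ)
    (gJ : EuclideanSpace ℝ (Fin n))  -- ∇𝒥(U)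
    (F : Ω → (EuclideanSpace ℝ (Fin n) →L[ℝ] EuclideanSpace ℝ (Fin d)))
    (P Phat : Ω → EuclideanSpace ℝ (Fin d))
    (R : EuclideanSpace ℝ (Fin n))
    (g G : Ω → EuclideanSpace ℝ (Fin n))
    (hg : ∀ ω, g ω = -(F ω).adjoint (P ω) + R)
    (hG : ∀ ω, G ω = -(F ω).adjoint (Phat ω) + R)
    (hgint : Integrable g μm) (hGint : Integrable G μm)
    (hFPint : Integrable (fun ω => ‖F ω‖ * ‖Phat ω‖) μm)
    (halign : ⟪gJ, ∫ ω, g ω ∂μm⟫ ≥ μ * ‖gJ‖ ^ 2)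
    (herr : ∀ ω, ‖(F ω).adjoint (P ω - Phat ω)‖ ≤ εp * ‖F ω‖ * ‖Phat ω‖)
    (hM₁ : (∫ ω, ‖F ω‖ * ‖Phat ω‖ ∂μm) ≤ M₁ * ‖gJ‖)
    (hεp : 0 ≤ εp) :
    ⟪gJ, ∫ ω, G ω ∂μm⟫ ≥ (μ - εp * M₁) * ‖gJ‖ ^ 2 := by
  have hpointwise : ∀ ω, ‖G ω - g ω‖ ≤ εp * (‖F ω‖ * ‖Phat ω‖) := fun ω => by
    have hsub : G ω - g ω = (F ω).adjoint (P ω - Phat ω) := by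
      rw [hg, hG, map_sub]
      abel
    rw [hsub, ← mul_assoc]
    exact herr ω
  refine real_inner_lower_bound_of_norm_sub_le halign ?_
  calc ‖∫ ω, G ω ∂μm - ∫ ω, g ω ∂μm‖
      ≤ ∫ ω, εp * (‖F ω‖ * ‖Phat ω‖) ∂μm :=
        norm_integral_sub_integral_le hGint hgint (hFPint.const_mul εp) hpointwise
    _ = εp * ∫ ω, ‖F ω‖ * ‖Phat ω‖ ∂μm := integral_const_mul εp _
    _ ≤ εp * (M₁ * ‖gJ‖) := mul_le_mul_of_nonneg_left hM₁ hεp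
    _ = εp * M₁ * ‖gJ‖ := (mul_assoc _ _ _).symm

/-- Supplementary Lemma 3: the expected inexact stochastic gradient
`G(U,ξ) = -⟨F(U,ξ), P̂(ξ)⟩ + R(U)` remains aligned with `∇𝒥(U)`:
`⟨∇𝒥(U), 𝔼 G⟩ ≥ (μ - ε_p M₁)‖∇𝒥(U)‖²`. -/
theorem stmt_5 (n d : ℕ) (Ω : Type*) [MeasurableSpace Ω]
    (μm : Measure Ω) [IsProbabilityMeasure μm]
    (μ εp M₁ : ℝ)
    (gJ : EuclideanSpace ℝ (Fin n))  -- ∇𝒥(U)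
    (F : Ω → (EuclideanSpace ℝ (Fin n) →L[ℝ] EuclideanSpace ℝ (Fin d)))
    (P Phat : Ω → EuclideanSpace ℝ (Fin d))
    (R : EuclideanSpace ℝ (Fin n))
    (g G : Ω → EuclideanSpace ℝ (Fin n))
    (hg : ∀ ω, g ω = -(F ω).adjoint (P ω) + R)
    (hG : ∀ ω, G ω = -(F ω).adjoint (Phat ω) + R)
    (hgint : Integrable g μm) (hGint : Integrable G μm)
    (hFPint : Integrable (fun ω => ‖F ω‖ * ‖Phat ω‖) μm)
    (halign : ⟪gJ, ∫ ω, g ω ∂μm⟫ ≥ μ * ‖gJ‖ ^ 2)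
    (herr : ∀ ω, ‖(F ω).adjoint (P ω - Phat ω)‖ ≤ εp * ‖F ω‖ * ‖Phat ω‖)
    (hM₁ : (∫ ω, ‖F ω‖ * ‖Phat ω‖ ∂μm) ≤ M₁ * ‖gJ‖)
    (hεp : 0 ≤ εp) :
    ⟪gJ, ∫ ω, G ω ∂μm⟫ ≥ (μ - εp * M₁) * ‖gJ‖ ^ 2 :=
  stmt_5_general n d Ω μm μ εp M₁ gJ F P Phat R g G hg hG hgint hGint hFPint halign herr hM₁ hεp
end
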